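/- arXiv:2505.14168 — 2 statements merged into one kernel-verified Lean document; each statement's English description precedes it below -/
import Mathlib

section
/- Let N ≥ 3 be an integer and let σ be a real constant with 0 < σ < N−2. Then there exists a constant C > 0 such that for every y ∈ ℝ^N, ∫_{ℝ^N} |y−z|^{−(N−2)} (1+|z|)^{−(2+σ)} dz ≤ C (1+|y|)^{−σ}. -/
open MeasureTheory Real

/-! Put `R = 1 + ‖y‖`. Where `‖y - z‖ ≤ R / 2` the weight `(1 + ‖z‖) ^ (-b)` is at most
`(R / 2) ^ (-b)`; where `‖y - z‖ > R / 2` and `‖z‖ ≤ 2 R` the kernel `‖y - z‖ ^ (-a)` is at most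
`(R / 2) ^ (-a)`; and where `‖z‖ > 2 R` we have `‖y - z‖ ≥ ‖z‖ / 2`, so the integrand is at most
`2 ^ a * ‖z‖ ^ (-(a + b))`. The three resulting radial integrals are computed in polar coordinates;
they converge because `a < n`, `b < n` and `n < a + b`, and each is a constant times
`R ^ (n - a - b)`, where `n = dim E`. The theorem is the case `E = ℝ^N`, `a = N - 2`,
`b = 2 + σ`. -/

open Set Module Metric
open scoped ENNReal

lemma lintegral_Ioc_rpow {q s : ℝ} (hs : 0 ≤ s) (hq : -1 < q) :
    ∫⁻ r in Ioc 0 s, ENNReal.ofReal (r ^ q) = ENNReal.ofReal (s ^ (q + 1) / (q + 1)) := by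
  have hint : IntegrableOn (fun r : ℝ ↦ r ^ q) (Ioc 0 s) :=
    (intervalIntegrable_iff_integrableOn_Ioc_of_le hs).mp
      (intervalIntegral.intervalIntegrable_rpow' hq)
  rw [← ofReal_integral_eq_lintegral_ofReal hint
      (ae_restrict_of_forall_mem measurableSet_Ioc fun r hr ↦ rpow_nonneg hr.1.le q),
    ← intervalIntegral.integral_of_le hs, integral_rpow (.inl hq), zero_rpow (by linarith),
    sub_zero]

lemma lintegral_Ioi_rpow {q s : ℝ} (hs : 0 < s) (hq : q < -1) :
    ∫⁻ r in Ioi s, ENNReal.ofReal (r ^ q) = ENNReal.ofReal (-s ^ (q + 1) / (q + 1)) := by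
  rw [← ofReal_integral_eq_lintegral_ofReal (integrableOn_Ioi_rpow_of_lt hq hs)
      (ae_restrict_of_forall_mem measurableSet_Ioi fun r hr ↦ rpow_nonneg (hs.trans hr).le q),
    integral_Ioi_rpow_of_lt hq hs]

lemma ofReal_norm_sub_rpow_mul_one_add_norm_rpow_le {E : Type*} [NormedAddCommGroup E]
    {a b R : ℝ} (ha : 0 ≤ a) (hb : 0 ≤ b) {y z : E} (hR : 0 < R) (hyR : ‖y‖ ≤ R)
    (hRy : R ≤ 1 + ‖y‖) (hz : z ≠ 0) :
    ENNReal.ofReal (‖y - z‖ ^ (-a) * (1 + ‖z‖) ^ (-b)) ≤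
      ENNReal.ofReal ((R / 2) ^ (-b)) *
          (Iic (R / 2)).indicator (fun r ↦ ENNReal.ofReal (r ^ (-a))) ‖y - z‖ +
        (ENNReal.ofReal ((R / 2) ^ (-a)) *
            (Iic (2 * R)).indicator (fun r ↦ ENNReal.ofReal (r ^ (-b))) ‖z‖ +
          ENNReal.ofReal (2 ^ a) *
            (Ioi (2 * R)).indicator (fun r ↦ ENNReal.ofReal (r ^ (-(a + b)))) ‖z‖) := by
  have hz0 : 0 < ‖z‖ := norm_pos_iff.mpr hz
  have hyz : ‖y‖ - ‖z‖ ≤ ‖y - z‖ := norm_sub_norm_le y z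
  have hzy : ‖z‖ - ‖y‖ ≤ ‖y - z‖ := norm_sub_rev y z ▸ norm_sub_norm_le z y
  have hweight : (1 + ‖z‖) ^ (-b) ≤ ‖z‖ ^ (-b) :=
    rpow_le_rpow_of_nonpos hz0 (by linarith) (by linarith)
  rcases le_or_gt ‖y - z‖ (R / 2) with hnear | hfar
  · rw [indicator_of_mem (mem_Iic.mpr hnear), ← ENNReal.ofReal_mul (by positivity)]
    refine le_trans (ENNReal.ofReal_le_ofReal ?_) le_self_add
    rw [mul_comm ((R / 2) ^ (-b))]
    exact mul_le_mul_of_nonneg_left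
      (rpow_le_rpow_of_nonpos (by positivity) (by linarith) (by linarith)) (by positivity)
  rcases le_or_gt ‖z‖ (2 * R) with hmid | hout
  · rw [indicator_of_mem (mem_Iic.mpr hmid), ← ENNReal.ofReal_mul (by positivity)]
    refine le_trans (ENNReal.ofReal_le_ofReal ?_) (le_self_add.trans le_add_self)
    exact mul_le_mul (rpow_le_rpow_of_nonpos (by positivity) hfar.le (by linarith)) hweight
      (by positivity) (by positivity)
  · rw [indicator_of_mem (mem_Ioi.mpr hout), ← ENNReal.ofReal_mul (by positivity)]
    refine le_trans (ENNReal.ofReal_le_ofReal ?_) (le_add_self.trans le_add_self)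
    calc ‖y - z‖ ^ (-a) * (1 + ‖z‖) ^ (-b) ≤ (‖z‖ / 2) ^ (-a) * ‖z‖ ^ (-b) :=
          mul_le_mul (rpow_le_rpow_of_nonpos (by positivity) (by linarith) (by linarith))
            hweight (by positivity) (by positivity)
      _ = 2 ^ a * ‖z‖ ^ (-(a + b)) := by
          rw [div_rpow hz0.le zero_le_two, rpow_neg zero_le_two, neg_add, rpow_add hz0]
          field_simp

lemma sum_of_region_bounds_eq {n a b R : ℝ} (hR : 0 < R) (ha : a < n) (hb : b < n)
    (hab : n < a + b) :
    (R / 2) ^ (-b) * ((R / 2) ^ (n + -a) / (n + -a)) +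
      ((R / 2) ^ (-a) * ((2 * R) ^ (n + -b) / (n + -b)) +
        2 ^ a * ((2 * R) ^ (n + -(a + b)) / -(n + -(a + b)))) =
      (2 ^ (a + b - n) / (n - a) + 2 ^ (a + n - b) / (n - b) + 2 ^ (n - b) / (a + b - n)) *
        R ^ (n - a - b) := by
  have h1 : n - a ≠ 0 := by linarith
  have h2 : n - b ≠ 0 := by linarith
  have h3 : a + b - n ≠ 0 := by linarith
  rw [show -(n + -(a + b)) = a + b - n by ring]
  simp only [div_rpow hR.le zero_le_two, mul_rpow zero_le_two hR.le, ← sub_eq_add_neg,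
    rpow_sub hR, rpow_sub zero_lt_two, rpow_add hR, rpow_add zero_lt_two, rpow_neg hR.le,
    rpow_neg zero_le_two, neg_add]
  field_simp
  ring

section HaarMeasure

variable {E : Type*} [NormedAddCommGroup E] [NormedSpace ℝ E] [MeasurableSpace E] [BorelSpace E]
  [FiniteDimensional ℝ E] (μ : Measure E) [μ.IsAddHaarMeasure]

lemma lintegral_fun_norm_addHaar [Nontrivial E] {f : ℝ → ℝ≥0∞} (hf : Measurable f) :
    ∫⁻ x, f ‖x‖ ∂μ =
      μ.toSphere univ * ∫⁻ r in Ioi 0, ENNReal.ofReal (r ^ (finrank ℝ E - 1)) * f r := by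
  have hmeas : Measurable fun p : sphere (0 : E) 1 × Ioi (0 : ℝ) ↦ f p.2 :=
    hf.comp (measurable_subtype_coe.comp measurable_snd)
  calc ∫⁻ x, f ‖x‖ ∂μ = ∫⁻ x : ({(0 : E)}ᶜ : Set E), f ‖(x : E)‖ ∂(μ.comap (↑)) := by
        rw [lintegral_subtype_comap (measurableSet_singleton 0).compl (fun x ↦ f ‖x‖),
          restrict_compl_singleton]
    _ = ∫⁻ p, f p.2 ∂(μ.toSphere.prod (.volumeIoiPow (finrank ℝ E - 1))) := by
        rw [← μ.measurePreserving_homeomorphUnitSphereProd.lintegral_comp hmeas]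
        simp
    _ = μ.toSphere univ * ∫⁻ r, f r ∂(.volumeIoiPow (finrank ℝ E - 1)) := by
        rw [lintegral_prod _ hmeas.aemeasurable]
        simp [mul_comm]
    _ = _ := by
        rw [Measure.volumeIoiPow, lintegral_withDensity_eq_lintegral_mul _
            (measurable_subtype_coe.pow_const _).ennreal_ofReal
            (g := fun r : Ioi (0 : ℝ) ↦ f r) (hf.comp measurable_subtype_coe)]
        exact congrArg _ (lintegral_subtype_comap measurableSet_Ioi
          fun r ↦ ENNReal.ofReal (r ^ (finrank ℝ E - 1)) * f r)

lemma lintegral_indicator_norm_rpow [Nontrivial E] {S : Set ℝ} (hS : MeasurableSet S) (p : ℝ) :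
    ∫⁻ x, S.indicator (fun r ↦ ENNReal.ofReal (r ^ p)) ‖x‖ ∂μ =
      μ.toSphere univ * ∫⁻ r in S ∩ Ioi 0, ENNReal.ofReal (r ^ ((finrank ℝ E : ℝ) - 1 + p)) := by
  have hf : Measurable fun r : ℝ ↦ ENNReal.ofReal (r ^ p) := by fun_prop
  rw [lintegral_fun_norm_addHaar μ (hf.indicator hS)]
  simp_rw [← indicator_mul_right _ fun r : ℝ ↦ ENNReal.ofReal (r ^ (finrank ℝ E - 1))]
  rw [lintegral_indicator hS, Measure.restrict_restrict hS]
  refine congrArg _ (setLIntegral_congr_fun (hS.inter measurableSet_Ioi) fun r hr ↦ ?_)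
  rw [← ENNReal.ofReal_mul (pow_nonneg hr.2.le _), ← rpow_natCast, ← rpow_add hr.2,
    Nat.cast_sub finrank_pos, Nat.cast_one]

lemma lintegral_indicator_Iic_norm_rpow [Nontrivial E] {s p : ℝ} (hs : 0 ≤ s)
    (hp : -(finrank ℝ E : ℝ) < p) :
    ∫⁻ x, (Iic s).indicator (fun r ↦ ENNReal.ofReal (r ^ p)) ‖x‖ ∂μ =
      μ.toSphere univ * ENNReal.ofReal (s ^ (finrank ℝ E + p) / (finrank ℝ E + p)) := by
  rw [lintegral_indicator_norm_rpow μ measurableSet_Iic, inter_comm, Ioi_inter_Iic,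
    lintegral_Ioc_rpow hs (by linarith)]
  ring_nf

lemma lintegral_indicator_Ioi_norm_rpow [Nontrivial E] {s p : ℝ} (hs : 0 < s)
    (hp : (finrank ℝ E : ℝ) + p < 0) :
    ∫⁻ x, (Ioi s).indicator (fun r ↦ ENNReal.ofReal (r ^ p)) ‖x‖ ∂μ =
      μ.toSphere univ * ENNReal.ofReal (s ^ (finrank ℝ E + p) / -(finrank ℝ E + p)) := by
  rw [lintegral_indicator_norm_rpow μ measurableSet_Ioi,
    inter_eq_self_of_subset_left (Ioi_subset_Ioi hs.le), lintegral_Ioi_rpow hs (by linarith),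
    div_neg, neg_div]
  ring_nf

theorem lintegral_norm_sub_rpow_mul_one_add_norm_rpow_le [Nontrivial E] {a b : ℝ}
    (ha : a < finrank ℝ E) (hb : b < finrank ℝ E) (hab : finrank ℝ E < a + b) (y : E) :
    ∫⁻ z, ENNReal.ofReal (‖y - z‖ ^ (-a) * (1 + ‖z‖) ^ (-b)) ∂μ ≤
      μ.toSphere univ * ENNReal.ofReal
        ((2 ^ (a + b - finrank ℝ E) / (finrank ℝ E - a) +
            2 ^ (a + finrank ℝ E - b) / (finrank ℝ E - b) +
            2 ^ (finrank ℝ E - b) / (a + b - finrank ℝ E)) *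
          (1 + ‖y‖) ^ (finrank ℝ E - a - b)) := by
  set n : ℝ := (finrank ℝ E : ℝ)
  set R := 1 + ‖y‖
  have hR : 0 < R := by positivity
  have hbound := fun z (hz : z ≠ 0) ↦ ofReal_norm_sub_rpow_mul_one_add_norm_rpow_le
    (y := y) (by linarith : 0 ≤ a) (by linarith : 0 ≤ b) hR (by linarith) le_rfl hz
  calc ∫⁻ z, ENNReal.ofReal (‖y - z‖ ^ (-a) * (1 + ‖z‖) ^ (-b)) ∂μ
      ≤ ∫⁻ z, (ENNReal.ofReal ((R / 2) ^ (-b)) *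
          (Iic (R / 2)).indicator (fun r ↦ ENNReal.ofReal (r ^ (-a))) ‖y - z‖ +
        (ENNReal.ofReal ((R / 2) ^ (-a)) *
            (Iic (2 * R)).indicator (fun r ↦ ENNReal.ofReal (r ^ (-b))) ‖z‖ +
          ENNReal.ofReal (2 ^ a) *
            (Ioi (2 * R)).indicator (fun r ↦ ENNReal.ofReal (r ^ (-(a + b)))) ‖z‖)) ∂μ :=
        lintegral_mono_ae ((μ.ae_ne 0).mono hbound)
    _ = ENNReal.ofReal ((R / 2) ^ (-b)) *
          ∫⁻ z, (Iic (R / 2)).indicator (fun r ↦ ENNReal.ofReal (r ^ (-a))) ‖z‖ ∂μ +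
        (ENNReal.ofReal ((R / 2) ^ (-a)) *
            ∫⁻ z, (Iic (2 * R)).indicator (fun r ↦ ENNReal.ofReal (r ^ (-b))) ‖z‖ ∂μ +
          ENNReal.ofReal (2 ^ a) *
            ∫⁻ z, (Ioi (2 * R)).indicator (fun r ↦ ENNReal.ofReal (r ^ (-(a + b)))) ‖z‖ ∂μ) := by
        simp_rw [norm_sub_rev y]
        rw [lintegral_add_left (by measurability), lintegral_add_left (by measurability),
          lintegral_const_mul _ (by measurability), lintegral_const_mul _ (by measurability),
          lintegral_const_mul _ (by measurability),
          lintegral_sub_right_eq_self (fun z ↦ (Iic (R / 2)).indicator _ ‖z‖)]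
    _ = μ.toSphere univ * ENNReal.ofReal
          ((R / 2) ^ (-b) * ((R / 2) ^ (n + -a) / (n + -a)) +
            ((R / 2) ^ (-a) * ((2 * R) ^ (n + -b) / (n + -b)) +
              2 ^ a * ((2 * R) ^ (n + -(a + b)) / -(n + -(a + b))))) := by
        rw [lintegral_indicator_Iic_norm_rpow μ (by positivity) (by linarith),
          lintegral_indicator_Iic_norm_rpow μ (by positivity) (by linarith),
          lintegral_indicator_Ioi_norm_rpow μ (by positivity) (by linarith)]
        have h₁ : 0 ≤ (R / 2) ^ (n + -a) / (n + -a) := div_nonneg (by positivity) (by linarith)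
        have h₂ : 0 ≤ (2 * R) ^ (n + -b) / (n + -b) := div_nonneg (by positivity) (by linarith)
        have h₃ : 0 ≤ (2 * R) ^ (n + -(a + b)) / -(n + -(a + b)) :=
          div_nonneg (by positivity) (by linarith)
        rw [ENNReal.ofReal_add (mul_nonneg (by positivity) h₁)
            (add_nonneg (mul_nonneg (by positivity) h₂) (mul_nonneg (by positivity) h₃)),
          ENNReal.ofReal_add (mul_nonneg (by positivity) h₂) (mul_nonneg (by positivity) h₃),
          ENNReal.ofReal_mul (by positivity), ENNReal.ofReal_mul (by positivity),
          ENNReal.ofReal_mul (by positivity)]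
        ring
    _ = _ := by rw [sum_of_region_bounds_eq hR ha hb hab]

theorem exists_integral_norm_sub_rpow_mul_one_add_norm_rpow_le {a b : ℝ}
    (ha : a < finrank ℝ E) (hb : b < finrank ℝ E) (hab : finrank ℝ E < a + b) :
    ∃ C > 0, ∀ y : E, ∫ z, ‖y - z‖ ^ (-a) * (1 + ‖z‖) ^ (-b) ∂μ ≤
      C * (1 + ‖y‖) ^ (finrank ℝ E - a - b) := by
  set n : ℝ := (finrank ℝ E : ℝ)
  have : Nontrivial E :=
    nontrivial_of_finrank_pos (R := ℝ) ((Nat.cast_pos (α := ℝ)).mp (by linarith))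
  set K : ℝ := 2 ^ (a + b - n) / (n - a) + 2 ^ (a + n - b) / (n - b) + 2 ^ (n - b) / (a + b - n)
  have hK : 0 < K := by
    have h₁ : 0 < n - a := by linarith
    have h₂ : 0 < n - b := by linarith
    have h₃ : 0 < a + b - n := by linarith
    positivity
  have hκ : 0 < μ.toSphere.real univ :=
    ENNReal.toReal_pos (Measure.measure_univ_ne_zero.mpr μ.toSphere_ne_zero) (measure_ne_top _ _)
  refine ⟨μ.toSphere.real univ * K, mul_pos hκ hK, fun y ↦ ?_⟩
  calc ∫ z, ‖y - z‖ ^ (-a) * (1 + ‖z‖) ^ (-b) ∂μ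
      = (∫⁻ z, ENNReal.ofReal (‖y - z‖ ^ (-a) * (1 + ‖z‖) ^ (-b)) ∂μ).toReal :=
        integral_eq_lintegral_of_nonneg_ae (.of_forall fun z ↦ by positivity) (by fun_prop)
    _ ≤ (μ.toSphere univ * ENNReal.ofReal (K * (1 + ‖y‖) ^ (n - a - b))).toReal :=
        ENNReal.toReal_mono (ENNReal.mul_ne_top (measure_ne_top _ _) ENNReal.ofReal_ne_top)
          (lintegral_norm_sub_rpow_mul_one_add_norm_rpow_le μ ha hb hab y)
    _ = μ.toSphere.real univ * K * (1 + ‖y‖) ^ (n - a - b) := by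
        rw [ENNReal.toReal_mul, ENNReal.toReal_ofReal (by positivity), mul_assoc]
        rfl

end HaarMeasure

theorem stmt1_general (N : ℕ) (σ : ℝ) (hσ0 : 0 < σ) (hσ : σ < (N : ℝ) - 2) :
    ∃ C > (0 : ℝ), ∀ y : EuclideanSpace ℝ (Fin N),
      (∫ z : EuclideanSpace ℝ (Fin N),
          ‖y - z‖ ^ (-((N : ℝ) - 2)) * (1 + ‖z‖) ^ (-(2 + σ))) ≤
        C * (1 + ‖y‖) ^ (-σ) := by
  have hdim : (finrank ℝ (EuclideanSpace ℝ (Fin N)) : ℝ) = N := by simp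
  obtain ⟨C, hC, hbound⟩ := exists_integral_norm_sub_rpow_mul_one_add_norm_rpow_le
    (volume : Measure (EuclideanSpace ℝ (Fin N))) (a := N - 2) (b := 2 + σ)
    (by linarith) (by linarith) (by linarith)
  refine ⟨C, hC, fun y ↦ (hbound y).trans_eq ?_⟩
  rw [hdim]
  congr 2
  ring

theorem stmt1 (N : ℕ) (hN : 3 ≤ N) (σ : ℝ) (hσ0 : 0 < σ) (hσ : σ < (N : ℝ) - 2) :
    ∃ C > (0 : ℝ), ∀ y : EuclideanSpace ℝ (Fin N),
      (∫ z : EuclideanSpace ℝ (Fin N),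
          ‖y - z‖ ^ (-((N : ℝ) - 2)) * (1 + ‖z‖) ^ (-(2 + σ))) ≤
        C * (1 + ‖y‖) ^ (-σ) :=
  stmt1_general N σ hσ0 hσ
end

section
/- Let N ≥ 3 be an integer. Then there exists a constant C > 0, depending only on N, such that for all x₁, x₂ ∈ ℝ^N and all μ₁, μ₂ > 0 with μ₁|x₁−x₂| ≤ 1 and |μ₁−μ₂| ≤ μ₁/2, one has for every y ∈ ℝ^N: |U_{x₁,μ₁}(y) − U_{x₂,μ₂}(y)| ≤ C ( μ₁|x₁−x₂| + μ₁^{−1}|μ₁−μ₂| ) U_{x₁,μ₁}(y). -/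
/-!
The ratio of the two bubbles is `w ^ ((N - 2) / 2)` with
`w = μ₂ (1 + μ₁² |y - x₁|²) / (μ₁ (1 + μ₂² |y - x₂|²))`. By the triangle inequality,
`|μ₂ (y - x₂)| ≤ (1 + 2ε) (|μ₁ (y - x₁)| + d)` and symmetrically, where `d = μ₁ |x₁ - x₂|` and
`ε = |μ₁ - μ₂| / μ₁`; hence both `w` and `w⁻¹` are at most `1 + O(d + ε)`. Since `z ↦ z ^ p` is
Lipschitz on a compact neighbourhood of `1` in `(0, ∞)`, `|w ^ p - 1| = O(d + ε)`.
-/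

open MeasureTheory Real

/-- The Aubin–Talenti bubble `U_{x,μ}` on `ℝ^N`. -/
noncomputable def bubble (N : ℕ) (x : EuclideanSpace ℝ (Fin N)) (μ : ℝ)
    (y : EuclideanSpace ℝ (Fin N)) : ℝ :=
  ((N : ℝ) * ((N : ℝ) - 2)) ^ (((N : ℝ) - 2) / 4) * μ ^ (((N : ℝ) - 2) / 2) *
    (1 + μ ^ 2 * ‖y - x‖ ^ 2) ^ (-(((N : ℝ) - 2) / 2))

open Set

theorem exists_abs_rpow_sub_one_le (p : ℝ) {K : ℝ} (hK : 1 ≤ K) :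
    ∃ L > 0, ∀ z ∈ Icc K⁻¹ K, |z ^ p - 1| ≤ L * |z - 1| := by
  have hne : ∀ z ∈ Icc K⁻¹ K, z ≠ 0 := fun z hz =>
    (lt_of_lt_of_le (by positivity) hz.1).ne'
  obtain ⟨L, hL⟩ := (contDiffOn_id.rpow_const_of_ne (n := 1) (p := p) hne).exists_lipschitzOnWith
    one_ne_zero (convex_Icc _ _) isCompact_Icc
  have h1 : (1 : ℝ) ∈ Icc K⁻¹ K := ⟨inv_le_one_of_one_le₀ hK, hK⟩
  refine ⟨L + 1, by positivity, fun z hz => ?_⟩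
  have hz1 := hL.dist_le_mul z hz 1 h1
  simp only [id, one_rpow, dist_eq] at hz1
  nlinarith [abs_nonneg (z - 1)]

theorem abs_div_sub_one_le_of_le_mul {p q A : ℝ} (hp : 0 < p) (hq : 0 < q) (hpq : p ≤ A * q)
    (hqp : q ≤ A * p) : |p / q - 1| ≤ A - 1 := by
  have hA : 1 ≤ A := by nlinarith
  rw [abs_le, le_sub_iff_add_le, sub_le_iff_le_add, div_le_iff₀ hq, le_div_iff₀ hq]
  constructor <;> nlinarith

theorem div_mem_Icc_inv_of_le_mul {p q A : ℝ} (hp : 0 < p) (hq : 0 < q) (hpq : p ≤ A * q)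
    (hqp : q ≤ A * p) : p / q ∈ Icc A⁻¹ A := by
  have hA : 0 < A := pos_of_mul_pos_left (hq.trans_le hqp) hp.le
  rw [mem_Icc, div_le_iff₀ hq, inv_le_iff_one_le_mul₀ hA, div_mul_eq_mul_div, le_div_iff₀ hq]
  exact ⟨by linarith, hpq⟩

theorem one_add_sq_le_of_le_mul_add {s t a d : ℝ} (hs : 0 ≤ s) (ha : 1 ≤ a)
    (hd : 0 ≤ d) (hd1 : d ≤ 1) (h : s ≤ a * (t + d)) :
    1 + s ^ 2 ≤ a ^ 2 * (1 + 2 * d) * (1 + t ^ 2) := by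
  have hs2 : s ^ 2 ≤ a ^ 2 * (t + d) ^ 2 := by
    rw [← mul_pow]; exact pow_le_pow_left₀ hs h 2
  -- `2td ≤ d(1 + t²)` and `d² ≤ d`
  have htd : 1 + (t + d) ^ 2 ≤ (1 + 2 * d) * (1 + t ^ 2) := by
    nlinarith [mul_nonneg hd (sq_nonneg (t - 1)), mul_nonneg hd (sq_nonneg t)]
  nlinarith [mul_le_mul_of_nonneg_left htd (by positivity : (0:ℝ) ≤ a ^ 2)]

theorem one_add_sq_mul_norm_sub_le {E : Type*} [SeminormedAddCommGroup E] {x x' y : E}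
    {μ μ' a d : ℝ} (hμ' : 0 ≤ μ') (ha : 1 ≤ a) (hd : 0 ≤ d) (hd1 : d ≤ 1)
    (hμμ' : μ' ≤ a * μ) (hxx' : μ' * ‖x - x'‖ ≤ a * d) :
    1 + μ' ^ 2 * ‖y - x'‖ ^ 2 ≤ a ^ 2 * (1 + 2 * d) * (1 + μ ^ 2 * ‖y - x‖ ^ 2) := by
  have h : μ' * ‖y - x'‖ ≤ a * (μ * ‖y - x‖ + d) := calc
    μ' * ‖y - x'‖ ≤ μ' * ‖y - x‖ + μ' * ‖x - x'‖ := by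
      rw [← mul_add]; exact mul_le_mul_of_nonneg_left (norm_sub_le_norm_sub_add_norm_sub _ _ _) hμ'
    _ ≤ a * μ * ‖y - x‖ + a * d := by gcongr
    _ = a * (μ * ‖y - x‖ + d) := by ring
  simpa only [mul_pow] using
    one_add_sq_le_of_le_mul_add (by positivity) ha hd hd1 h

theorem mul_one_add_sq_mul_norm_sub_le {E : Type*} [SeminormedAddCommGroup E] {x₁ x₂ y : E}
    {μ₁ μ₂ ε : ℝ} (hμ₁ : 0 < μ₁) (hμ₂ : 0 < μ₂) (hε : 0 ≤ ε) (hμ₂₁ : μ₂ ≤ (1 + ε) * μ₁)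
    (hμ₁₂ : μ₁ ≤ (1 + ε) * μ₂) (hd : μ₁ * ‖x₁ - x₂‖ ≤ 1) :
    μ₂ * (1 + μ₁ ^ 2 * ‖y - x₁‖ ^ 2) ≤
        (1 + ε) ^ 3 * (1 + 2 * (μ₁ * ‖x₁ - x₂‖)) * (μ₁ * (1 + μ₂ ^ 2 * ‖y - x₂‖ ^ 2)) ∧
      μ₁ * (1 + μ₂ ^ 2 * ‖y - x₂‖ ^ 2) ≤
        (1 + ε) ^ 3 * (1 + 2 * (μ₁ * ‖x₁ - x₂‖)) * (μ₂ * (1 + μ₁ ^ 2 * ‖y - x₁‖ ^ 2)) := by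
  have ha : 1 ≤ 1 + ε := by linarith
  have hd₀ : 0 ≤ μ₁ * ‖x₁ - x₂‖ := by positivity
  have hvu := one_add_sq_mul_norm_sub_le (x := x₁) (x' := x₂) (y := y) hμ₂.le ha hd₀ hd hμ₂₁
    (by rw [← mul_assoc]; exact mul_le_mul_of_nonneg_right hμ₂₁ (norm_nonneg _))
  have huv := one_add_sq_mul_norm_sub_le (x := x₂) (x' := x₁) (y := y) hμ₁.le ha hd₀ hd hμ₁₂
    (by rw [norm_sub_rev]; exact le_mul_of_one_le_left hd₀ ha)
  constructor
  · calc _ ≤ (1 + ε) * μ₁ * ((1 + ε) ^ 2 * (1 + 2 * (μ₁ * ‖x₁ - x₂‖)) *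
          (1 + μ₂ ^ 2 * ‖y - x₂‖ ^ 2)) := by gcongr
      _ = _ := by ring
  · calc _ ≤ (1 + ε) * μ₂ * ((1 + ε) ^ 2 * (1 + 2 * (μ₁ * ‖x₁ - x₂‖)) *
          (1 + μ₁ ^ 2 * ‖y - x₁‖ ^ 2)) := by gcongr
      _ = _ := by ring

theorem bubble_nonneg {N : ℕ} (hN : 2 ≤ N) (x : EuclideanSpace ℝ (Fin N)) {μ : ℝ} (hμ : 0 ≤ μ)
    (y : EuclideanSpace ℝ (Fin N)) : 0 ≤ bubble N x μ y := by
  have hN' : (2 : ℝ) ≤ N := by exact_mod_cast hN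
  unfold bubble
  have : (0 : ℝ) ≤ N * (N - 2) := by nlinarith
  positivity

theorem bubble_eq_rpow_mul_bubble (N : ℕ) (x₁ x₂ y : EuclideanSpace ℝ (Fin N)) {μ₁ μ₂ : ℝ}
    (hμ₁ : 0 < μ₁) (hμ₂ : 0 < μ₂) :
    bubble N x₂ μ₂ y = (μ₂ * (1 + μ₁ ^ 2 * ‖y - x₁‖ ^ 2) / (μ₁ * (1 + μ₂ ^ 2 * ‖y - x₂‖ ^ 2)))
      ^ (((N : ℝ) - 2) / 2) * bubble N x₁ μ₁ y := by
  have hu : 0 < 1 + μ₁ ^ 2 * ‖y - x₁‖ ^ 2 := by positivity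
  have hv : 0 < 1 + μ₂ ^ 2 * ‖y - x₂‖ ^ 2 := by positivity
  unfold bubble
  rw [div_rpow (by positivity) (by positivity), mul_rpow hμ₂.le hu.le, mul_rpow hμ₁.le hv.le,
    rpow_neg hu.le, rpow_neg hv.le]
  have := (rpow_pos_of_pos hμ₁ (((N : ℝ) - 2) / 2)).ne'
  have := (rpow_pos_of_pos hu (((N : ℝ) - 2) / 2)).ne'
  have := (rpow_pos_of_pos hv (((N : ℝ) - 2) / 2)).ne'
  field_simp

theorem stmt12 (N : ℕ) (hN : 3 ≤ N) :
    ∃ C > (0 : ℝ), ∀ (x₁ x₂ : EuclideanSpace ℝ (Fin N)) (μ₁ μ₂ : ℝ),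
      0 < μ₁ → 0 < μ₂ → μ₁ * ‖x₁ - x₂‖ ≤ 1 → |μ₁ - μ₂| ≤ μ₁ / 2 →
      ∀ y : EuclideanSpace ℝ (Fin N),
        |bubble N x₁ μ₁ y - bubble N x₂ μ₂ y| ≤
          C * (μ₁ * ‖x₁ - x₂‖ + μ₁⁻¹ * |μ₁ - μ₂|) * bubble N x₁ μ₁ y := by
  obtain ⟨L, hL, hLip⟩ :=
    exists_abs_rpow_sub_one_le (((N : ℝ) - 2) / 2) (by norm_num : (1 : ℝ) ≤ 24)
  refine ⟨42 * L, by positivity, fun x₁ x₂ μ₁ μ₂ hμ₁ hμ₂ hd1 hμ y => ?_⟩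
  set d := μ₁ * ‖x₁ - x₂‖
  set ε := μ₁⁻¹ * |μ₁ - μ₂|
  set w := μ₂ * (1 + μ₁ ^ 2 * ‖y - x₁‖ ^ 2) / (μ₁ * (1 + μ₂ ^ 2 * ‖y - x₂‖ ^ 2))
  have hd : 0 ≤ d := by positivity
  have hε : 0 ≤ ε ∧ ε ≤ 1 / 2 := ⟨by positivity, by rw [inv_mul_le_iff₀ hμ₁]; linarith⟩
  have habs : |μ₁ - μ₂| = μ₁ * ε := by rw [← mul_assoc, mul_inv_cancel₀ hμ₁.ne', one_mul]
  obtain ⟨hw₁, hw₂⟩ := mul_one_add_sq_mul_norm_sub_le (y := y) (ε := 2 * ε) hμ₁ hμ₂ (by linarith)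
    (by nlinarith [abs_le.mp habs.le]) (by nlinarith [abs_le.mp habs.le]) hd1
  set A := (1 + 2 * ε) ^ 3 * (1 + 2 * d)
  have hA : A - 1 ≤ 42 * (d + ε) ∧ A ≤ 24 := by
    constructor <;> nlinarith [mul_nonneg hε.1 hd, mul_nonneg (mul_nonneg hε.1 hε.1) hd]
  have hw : w ∈ Icc (24 : ℝ)⁻¹ 24 :=
    Icc_subset_Icc (inv_anti₀ (by positivity) hA.2) hA.2
      (div_mem_Icc_inv_of_le_mul (by positivity) (by positivity) hw₁ hw₂)
  have hU := bubble_nonneg (by omega) x₁ hμ₁.le y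
  have hU₂ : bubble N x₂ μ₂ y = w ^ (((N : ℝ) - 2) / 2) * bubble N x₁ μ₁ y :=
    bubble_eq_rpow_mul_bubble N x₁ x₂ y hμ₁ hμ₂
  calc |bubble N x₁ μ₁ y - bubble N x₂ μ₂ y|
      = |w ^ (((N : ℝ) - 2) / 2) - 1| * bubble N x₁ μ₁ y := by
        rw [hU₂, ← abs_of_nonneg hU, ← abs_mul, abs_of_nonneg hU, abs_sub_comm]
        ring_nf
    _ ≤ L * (A - 1) * bubble N x₁ μ₁ y := by
        gcongr
        exact (hLip w hw).trans
          (by gcongr; exact abs_div_sub_one_le_of_le_mul (by positivity) (by positivity) hw₁ hw₂)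
    _ ≤ L * (42 * (d + ε)) * bubble N x₁ μ₁ y := by gcongr; exact hA.1
    _ = 42 * L * (d + ε) * bubble N x₁ μ₁ y := by ring
end
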